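/- arXiv:2601.22665 — 4 statements merged into one kernel-verified Lean document; each statement's English description precedes it below -/
import Mathlib

section
/- Let n ≥ 4. For the standard half-space bubble U₊, all of the following integrals are finite, and with Θ := ∫_{ℝ^{n−1}} (1+‖y′‖²)^{−(n−2)} dy′ (the squared L² norm of the boundary trace U₊(·,0)) one has: ∫_{ℝⁿ₊} t·‖∇U₊(y′,t)‖² dy′ dt = Θ/2, ∫_{ℝⁿ₊} t·‖∇′U₊(y′,t)‖² dy′ dt = Θ/4, and ∫_{ℝⁿ₊} t·(∂ₜU₊(y′,t))² dy′ dt = Θ/4. -/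
open MeasureTheory Real Set Filter Topology

/-- The standard half-space bubble `U₊(y′,t) = (‖y′‖² + (1+t)²)^{-(n-2)/2}`. -/
noncomputable def Uplus (n : ℕ) (y : EuclideanSpace ℝ (Fin (n - 1))) (t : ℝ) : ℝ :=
  (‖y‖ ^ 2 + (1 + t) ^ 2) ^ (-(((n : ℝ) - 2) / 2))

/-- Squared norm of the tangential gradient `∇′U₊`. -/
noncomputable def tanGradSq (n : ℕ) (y : EuclideanSpace ℝ (Fin (n - 1))) (t : ℝ) : ℝ :=
  ‖fderiv ℝ (fun y' => Uplus n y' t) y‖ ^ 2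

/-- Square of the normal derivative `∂ₜU₊`. -/
noncomputable def normDerSq (n : ℕ) (y : EuclideanSpace ℝ (Fin (n - 1))) (t : ℝ) : ℝ :=
  (deriv (fun t' => Uplus n y t') t) ^ 2

/-- Squared norm of the full gradient `∇U₊ = (∇′U₊, ∂ₜU₊)`. -/
noncomputable def gradSq (n : ℕ) (y : EuclideanSpace ℝ (Fin (n - 1))) (t : ℝ) : ℝ :=
  tanGradSq n y t + normDerSq n y t


lemma integrableOn_Ioi_of_bound {g : ℝ → ℝ} {a : ℝ} (ha : a < -1)
    (hg : ContinuousOn g (Set.Ici (0:ℝ)))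
    (hb : ∀ r : ℝ, 1 ≤ r → |g r| ≤ r ^ a) : IntegrableOn g (Set.Ioi (0:ℝ)) := by
  have h1 : IntegrableOn g (Set.Ioc (0:ℝ) 1) :=
    ((hg.mono Icc_subset_Ici_self).integrableOn_Icc).mono_set Ioc_subset_Icc_self
  have h2 : IntegrableOn g (Set.Ioi (1:ℝ)) := by
    refine (integrableOn_Ioi_rpow_of_lt ha one_pos).mono'
      ((hg.mono (Set.Ioi_subset_Ici zero_le_one)).aestronglyMeasurable
        measurableSet_Ioi) ?_
    filter_upwards [ae_restrict_mem measurableSet_Ioi] with r hr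
    simpa using hb r (le_of_lt hr)
  have h := h1.union h2
  rwa [Set.Ioc_union_Ioi_eq_Ioi zero_le_one] at h

lemma integrableOn_linear_mul_one_add {γ : ℝ} (h : 2 < γ) :
    IntegrableOn (fun t : ℝ => t * (1+t)^(-γ)) (Set.Ioi (0:ℝ)) := by
  refine integrableOn_Ioi_of_bound (a := 1 - γ) (by linarith) ?_ ?_
  · apply ContinuousOn.mul continuousOn_id
    apply ContinuousOn.rpow_const (by fun_prop)
    intro x hx; left; have : (0:ℝ) ≤ x := hx; intro hc; linarith
  · intro r hr
    have hr0 : (0:ℝ) < r := lt_of_lt_of_le one_pos hr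
    have h1 : (0:ℝ) < 1 + r := by linarith
    have hb : (1+r)^(-γ) ≤ r^(-γ) :=
      rpow_le_rpow_of_nonpos hr0 (by linarith) (by linarith)
    rw [abs_of_nonneg (by positivity)]
    calc r * (1+r)^(-γ) ≤ r * r^(-γ) := mul_le_mul_of_nonneg_left hb hr0.le
      _ = r ^ (1 - γ) := by
          have he : (1:ℝ) - γ = 1 + (-γ) := by ring
          rw [he, rpow_one_add' hr0.le (by intro hc; linarith)]

/-- `∫₀^∞ t (1+t)^{-γ} dt = 1/((γ-1)(γ-2))`. -/
lemma integral_linear_mul_one_add {γ : ℝ} (h : 2 < γ) :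
    ∫ t in Set.Ioi (0:ℝ), t * (1+t)^(-γ) = 1/((γ-1)*(γ-2)) := by
  set F : ℝ → ℝ := fun t => (1+t)^(2-γ)/(2-γ) - (1+t)^(1-γ)/(1-γ) with hF
  have hderiv : ∀ x ∈ Set.Ici (0:ℝ), HasDerivAt F (x * (1+x)^(-γ)) x := by
    intro x hx
    have hx0 : (0:ℝ) ≤ x := hx
    have h1 : (0:ℝ) < 1 + x := by linarith
    have hid : HasDerivAt (fun t : ℝ => 1 + t) 1 x := (hasDerivAt_id x).const_add 1
    have d1 := hid.rpow_const (p := 2-γ) (Or.inl h1.ne')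
    have d2 := hid.rpow_const (p := 1-γ) (Or.inl h1.ne')
    have hd := (d1.div_const (2-γ)).sub (d2.div_const (1-γ))
    refine hd.congr_deriv ?_
    symm
    have e1 : (1+x)^(2-γ-1) = (1+x) * (1+x)^(-γ) := by
      have he : (2:ℝ)-γ-1 = 1 + (-γ) := by ring
      rw [he, rpow_one_add' h1.le (by intro hc; linarith)]
    have e2 : (1+x)^(1-γ-1) = (1+x)^(-γ) := by norm_num
    have hγ1 : (1:ℝ)-γ ≠ 0 := by intro hc; linarith
    have hγ2 : (2:ℝ)-γ ≠ 0 := by intro hc; linarith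
    rw [e1, e2]
    field_simp
    ring
  have hlim : Tendsto F atTop (𝓝 0) := by
    have hT : Tendsto (fun t : ℝ => 1 + t) atTop atTop := tendsto_atTop_add_const_left _ _ tendsto_id
    have t1 : Tendsto (fun t : ℝ => (1+t)^(2-γ)) atTop (𝓝 0) := by
      have h2 : (2:ℝ) - γ = -(γ-2) := by ring
      rw [h2]; exact (tendsto_rpow_neg_atTop (by linarith)).comp hT
    have t2 : Tendsto (fun t : ℝ => (1+t)^(1-γ)) atTop (𝓝 0) := by
      have h2 : (1:ℝ) - γ = -(γ-1) := by ring
      rw [h2]; exact (tendsto_rpow_neg_atTop (by linarith)).comp hT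
    have := (t1.div_const (2-γ)).sub (t2.div_const (1-γ))
    simpa using this
  have key := integral_Ioi_of_hasDerivAt_of_tendsto'
      hderiv (integrableOn_linear_mul_one_add h) hlim
  rw [key, hF]
  have hγ1 : (1:ℝ)-γ ≠ 0 := by intro hc; linarith
  have hγ2 : (2:ℝ)-γ ≠ 0 := by intro hc; linarith
  have hγ3 : (γ-1)*(γ-2) ≠ 0 := by
    apply mul_ne_zero <;> intro hc <;> [linarith; linarith]
  simp only [add_zero, one_rpow]
  rw [eq_div_iff hγ3]
  field_simp
  ring



lemma cont_pow_one_add_sq (k : ℕ) (β : ℝ) :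
    Continuous (fun r : ℝ => r^k * (1+r^2)^(-β)) := by
  apply Continuous.mul (continuous_pow k)
  apply Continuous.rpow_const (by continuity)
  intro x; left; positivity

lemma integrableOn_pow_mul_one_add_sq {k : ℕ} {β : ℝ} (h : (k:ℝ) + 1 < 2*β) :
    IntegrableOn (fun r : ℝ => r^k * (1+r^2)^(-β)) (Set.Ioi (0:ℝ)) := by
  have hβ : 0 < β := by nlinarith [Nat.cast_nonneg (α := ℝ) k]
  refine integrableOn_Ioi_of_bound (a := (k:ℝ) - 2*β) (by linarith) (cont_pow_one_add_sq k β).continuousOn ?_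
  intro r hr
  have hr0 : (0:ℝ) < r := lt_of_lt_of_le one_pos hr
  have h1 : (0:ℝ) < 1 + r^2 := by positivity
  have hb : (1+r^2)^(-β) ≤ (r^2)^(-β) :=
    rpow_le_rpow_of_nonpos (by positivity) (by nlinarith) (by linarith)
  have habs : |r^k * (1+r^2)^(-β)| = r^k * (1+r^2)^(-β) := by
    apply abs_of_nonneg; positivity
  rw [habs]
  calc r^k * (1+r^2)^(-β) ≤ r^k * (r^2)^(-β) := by
        apply mul_le_mul_of_nonneg_left hb (by positivity)
    _ = r ^ ((k:ℝ) - 2*β) := by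
        rw [← rpow_natCast r k, ← rpow_natCast r 2, ← rpow_mul hr0.le,
          ← rpow_add hr0]
        norm_num [sub_eq_add_neg, mul_comm]


/-- Recurrence for the radial integrals `J_k(β ) = ∫₀^∞ r^k (1+r²)^{-β} dr`. -/
lemma radial_recurrence {k : ℕ} {β : ℝ} (h : (k:ℝ) + 1 < 2*β) :
    ∫ r in Set.Ioi (0:ℝ), r^k * (1+r^2)^(-(β+1))
      = ((2*β - ((k:ℝ)+1))/(2*β)) * ∫ r in Set.Ioi (0:ℝ), r^k * (1+r^2)^(-β) := by
  have hβ : 0 < β := by nlinarith [Nat.cast_nonneg (α := ℝ) k]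
  set F : ℝ → ℝ := fun r => r^(k+1) * (1+r^2)^(-β) with hFdef
  set f' : ℝ → ℝ := fun r =>
    (((k:ℝ)+1) - 2*β) * (r^k * (1+r^2)^(-β)) + (2*β) * (r^k * (1+r^2)^(-(β+1))) with hf'def
  have hderiv : ∀ x ∈ Set.Ici (0:ℝ), HasDerivAt F (f' x) x := by
    intro x _
    have h1 : (0:ℝ) < 1 + x^2 := by positivity
    have dp : HasDerivAt (fun r : ℝ => r^(k+1)) (((k:ℝ)+1) * x^k) x := by
      simpa using hasDerivAt_pow (k+1) x
    have hin : HasDerivAt (fun r : ℝ => 1 + r^2) (2*x) x := by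
      simpa using ((hasDerivAt_pow 2 x).const_add 1)
    have dr := hin.rpow_const (p := -β) (Or.inl h1.ne')
    have hd := dp.mul dr
    refine hd.congr_deriv ?_
    symm
    have key : (1+x^2) * (1+x^2)^(-β-1) = (1+x^2)^(-β) := by
      have h2 := rpow_one_add' (x := 1+x^2) (y := -β-1) h1.le (by intro hc; nlinarith)
      rw [← h2]
      congr 1; ring
    have e2 : (1+x^2)^(-(β+1)) = (1+x^2)^(-β-1) := by ring_nf
    rw [hf'def]
    simp only [e2]
    linear_combination (2*β*x^k) * key
  have hint : IntegrableOn f' (Set.Ioi (0:ℝ)) := by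
    apply Integrable.add
    · exact (integrableOn_pow_mul_one_add_sq h).const_mul _
    · exact (integrableOn_pow_mul_one_add_sq (β := β+1) (by linarith)).const_mul _
  have hlim : Tendsto F atTop (𝓝 0) := by
    have hb : ∀ᶠ r in atTop, F r ≤ r ^ (((k:ℝ)+1) - 2*β) := by
      filter_upwards [eventually_ge_atTop (1:ℝ)] with r hr
      have hr0 : (0:ℝ) < r := lt_of_lt_of_le one_pos hr
      have hbb : (1+r^2)^(-β) ≤ (r^2)^(-β) :=
        rpow_le_rpow_of_nonpos (by positivity) (by nlinarith) (by linarith)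
      calc F r ≤ r^(k+1) * (r^2)^(-β) := mul_le_mul_of_nonneg_left hbb (by positivity)
        _ = r ^ (((k:ℝ)+1) - 2*β) := by
            rw [← rpow_natCast r (k+1), ← rpow_natCast r 2, ← rpow_mul hr0.le,
              ← rpow_add hr0]
            norm_num [sub_eq_add_neg, mul_comm]
    have h0 : ∀ᶠ r in atTop, 0 ≤ F r := by
      filter_upwards [eventually_ge_atTop (0:ℝ)] with r hr
      have : (0:ℝ) < 1 + r^2 := by positivity
      positivity
    have ht : Tendsto (fun r : ℝ => r ^ (((k:ℝ)+1) - 2*β)) atTop (𝓝 0) := by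
      have he : ((k:ℝ)+1) - 2*β = -(2*β - ((k:ℝ)+1)) := by ring
      rw [he]
      exact tendsto_rpow_neg_atTop (by linarith)
    exact squeeze_zero' h0 hb ht
  have key := integral_Ioi_of_hasDerivAt_of_tendsto' hderiv hint hlim
  have hF0 : F 0 = 0 := by simp [hFdef]
  rw [hF0, sub_zero] at key
  -- key : ∫ f' = 0
  rw [hf'def] at key
  rw [integral_add ((integrableOn_pow_mul_one_add_sq h).const_mul _)
      ((integrableOn_pow_mul_one_add_sq (β := β+1) (by linarith)).const_mul _),
    integral_const_mul, integral_const_mul] at key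
  have h2β : (2*β) ≠ 0 := by positivity
  rw [div_mul_eq_mul_div, eq_div_iff h2β]
  linarith [key]


variable {m : ℕ}

local notation "E" => EuclideanSpace ℝ (Fin m)

lemma polar_repr (hm : 1 ≤ m) (β : ℝ) :
    ∫ y : E, (1+‖y‖^2)^(-β)
      = (m * (volume (Metric.ball (0:E) 1)).toReal) *
        ∫ r in Set.Ioi (0:ℝ), r^(m-1) * (1+r^2)^(-β) := by
  haveI : Nontrivial E := by
    apply Module.nontrivial_of_finrank_pos (R := ℝ)
    rw [finrank_euclideanSpace_fin]; exact hm
  have h := MeasureTheory.integral_fun_norm_addHaar (volume : Measure E)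
    (fun r : ℝ => (1+r^2)^(-β))
  rw [finrank_euclideanSpace_fin] at h
  rw [h]
  simp only [nsmul_eq_mul, smul_eq_mul]
  rw [← integral_const_mul, mul_assoc, integral_const_mul]
  rfl

lemma euclidean_integrable {β : ℝ} (h : (m:ℝ) < 2*β) :
    Integrable (fun y : E => (1+‖y‖^2)^(-β)) := by
  have h2 := integrable_rpow_neg_one_add_norm_sq (μ := (volume : Measure E)) (r := 2*β)
    (by rw [finrank_euclideanSpace_fin]; exact h)
  have : ∀ y : E, ((1:ℝ) + ‖y‖^2) ^ (-(2*β)/2) = (1+‖y‖^2)^(-β) := by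
    intro y; congr 1; ring
  simpa [this] using h2

/-- Recurrence for `C(β) = ∫_{ℝ^m} (1+‖y‖²)^{-β}`. -/
lemma euclidean_recurrence (hm : 1 ≤ m) {β : ℝ} (h : (m:ℝ) < 2*β) :
    ∫ y : E, (1+‖y‖^2)^(-(β+1))
      = ((2*β - m)/(2*β)) * ∫ y : E, (1+‖y‖^2)^(-β) := by
  have hk : ((m-1 : ℕ):ℝ) + 1 = (m:ℝ) := by
    rw [Nat.cast_sub hm]; ring
  have h' : ((m-1:ℕ):ℝ) + 1 < 2*β := by rw [hk]; exact h
  rw [polar_repr hm, polar_repr hm, radial_recurrence h', hk]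
  ring

/-- Scaling identity for `∫ (s² + ‖y‖²)^{-β}`. -/
lemma euclidean_scaling {β s : ℝ} (hs : 0 < s) :
    ∫ y : E, (s^2+‖y‖^2)^(-β)
      = s ^ ((m:ℝ) - 2*β) * ∫ y : E, (1+‖y‖^2)^(-β) := by
  have h := MeasureTheory.Measure.integral_comp_smul_of_nonneg (volume : Measure E)
    (fun y : E => (s^2+‖y‖^2)^(-β)) s (hR := hs.le)
  rw [finrank_euclideanSpace_fin] at h
  have heq : ∀ x : E, (s^2+‖s • x‖^2)^(-β) = s ^ (-2*β) * (1+‖x‖^2)^(-β) := by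
    intro x
    have h1 : ‖s • x‖^2 = s^2 * ‖x‖^2 := by
      rw [norm_smul, mul_pow, Real.norm_eq_abs, sq_abs]
    have h2 : s^2 + ‖s • x‖^2 = s^2 * (1+‖x‖^2) := by rw [h1]; ring
    rw [h2, Real.mul_rpow (by positivity) (by positivity)]
    congr 1
    rw [← rpow_natCast s 2, ← rpow_mul hs.le]
    norm_num
  simp only [heq] at h
  rw [integral_const_mul] at h
  -- h : s^(-2β) * ∫ (1+‖x‖²)^{-β} = (s^m)⁻¹ • ∫ (s²+‖y‖²)^{-β}
  rw [smul_eq_mul] at h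
  have hsm : (0:ℝ) < s ^ m := by positivity
  have := congrArg (fun z => (s:ℝ)^m * z) h
  simp only [← mul_assoc, mul_inv_cancel₀ hsm.ne', one_mul] at this
  rw [← this, ← rpow_natCast s m, ← rpow_add hs]
  ring_nf

section
variable (n : ℕ) (y : EuclideanSpace ℝ (Fin (n-1))) (t : ℝ)

lemma rpow_sq_eq {b p : ℝ} (hb : 0 < b) : (b ^ p) ^ 2 = b ^ (2*p) := by
  rw [← rpow_natCast (b ^ p) 2, ← rpow_mul hb.le]
  ring_nf

lemma tanGradSq_eq (hn : 4 ≤ n) (ht : 0 ≤ t) :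
    tanGradSq n y t = ((n:ℝ)-2)^2 * (‖y‖^2 * ((1+t)^2+‖y‖^2)^(-(n:ℝ))) := by
  set α : ℝ := ((n:ℝ)-2)/2 with hα
  have hn4 : (4:ℝ) ≤ (n:ℝ) := by exact_mod_cast hn
  set b : ℝ := ‖y‖^2 + (1+t)^2 with hb
  have hbpos : 0 < b := by positivity
  -- derivative of the inner map
  have hinner : HasFDerivAt (fun y' : EuclideanSpace ℝ (Fin (n-1)) => ‖y'‖^2 + (1+t)^2)
      (2 • (innerSL ℝ y)) y := by
    have h1 : HasFDerivAt (fun y' : EuclideanSpace ℝ (Fin (n-1)) => y') (ContinuousLinearMap.id ℝ _) y :=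
      hasFDerivAt_id y
    have h2 := h1.norm_sq
    simp only [ContinuousLinearMap.comp_id] at h2
    exact h2.add_const _
  have houter : HasDerivAt (fun x : ℝ => x ^ (-α)) ((-α) * b ^ (-α-1)) b := by
    simpa using Real.hasDerivAt_rpow_const (x := b) (p := -α) (Or.inl hbpos.ne')
  have hcomp := houter.comp_hasFDerivAt y hinner
  have hf : fderiv ℝ (fun y' => Uplus n y' t) y = ((-α) * b ^ (-α-1)) • (2 • (innerSL ℝ y)) :=
    hcomp.fderiv
  rw [tanGradSq, hf]
  rw [show (2:ℕ) • (innerSL ℝ) y = (2:ℝ) • (innerSL ℝ) y from (Nat.cast_smul_eq_nsmul ℝ 2 _).symm]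
  rw [norm_smul, norm_smul]
  simp only [innerSL_apply_norm, Real.norm_eq_abs]
  rw [show ((1+t)^2+‖y‖^2 : ℝ) = b from by rw [hb]; ring]
  have habs : |(-α) * b^(-α-1)| = α * b^(-α-1) := by
    rw [abs_mul, abs_neg, abs_of_nonneg (by rw [hα]; linarith : (0:ℝ) ≤ α),
      abs_of_nonneg (rpow_nonneg hbpos.le _)]
  have hsq : (b ^ (-α-1))^2 = b ^ (-(n:ℝ)) := by
    rw [rpow_sq_eq hbpos]; congr 1; rw [hα]; ring
  rw [habs, abs_two, hα]
  linear_combination (((n:ℝ)-2)^2 * ‖y‖^2) * hsq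

lemma normDerSq_eq (hn : 4 ≤ n) (ht : 0 ≤ t) :
    normDerSq n y t = ((n:ℝ)-2)^2 * ((1+t)^2 * ((1+t)^2+‖y‖^2)^(-(n:ℝ))) := by
  set α : ℝ := ((n:ℝ)-2)/2 with hα
  have hn4 : (4:ℝ) ≤ (n:ℝ) := by exact_mod_cast hn
  set b : ℝ := ‖y‖^2 + (1+t)^2 with hb
  have hbpos : 0 < b := by positivity
  have hinner : HasDerivAt (fun t' : ℝ => ‖y‖^2 + (1+t')^2) (2*(1+t)) t := by
    have h1 : HasDerivAt (fun t' : ℝ => 1 + t') 1 t := (hasDerivAt_id t).const_add 1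
    have h2 := h1.pow 2
    simpa using h2.const_add (‖y‖^2)
  have hd := hinner.rpow_const (p := -α) (Or.inl hbpos.ne')
  have hder : deriv (fun t' => Uplus n y t') t = 2*(1+t) * (-α) * b ^ (-α-1) :=
    hd.deriv
  rw [normDerSq, hder]
  have hsq : (b ^ (-α-1))^2 = b ^ (-(n:ℝ)) := by
    rw [rpow_sq_eq hbpos]; congr 1; rw [hα]; ring
  rw [show ((1+t)^2+‖y‖^2 : ℝ) = b from by rw [hb]; ring, hα]
  linear_combination (((n:ℝ)-2)^2 * (1+t)^2) * hsq

lemma gradSq_eq (hn : 4 ≤ n) (ht : 0 ≤ t) :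
    gradSq n y t = ((n:ℝ)-2)^2 * ((1+t)^2+‖y‖^2)^(-((n:ℝ)-1)) := by
  rw [gradSq, tanGradSq_eq n y t hn ht, normDerSq_eq n y t hn ht]
  have hn4 : (4:ℝ) ≤ (n:ℝ) := by exact_mod_cast hn
  set b : ℝ := (1+t)^2 + ‖y‖^2 with hb
  have hbpos : 0 < b := by positivity
  have hne : 1 + -(n:ℝ) ≠ 0 := by intro hc; linarith
  have key : b * b ^ (-(n:ℝ)) = b ^ (-((n:ℝ)-1)) := by
    have h2 := rpow_one_add' (x := b) (y := -(n:ℝ)) hbpos.le hne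
    rw [← h2]; congr 1; ring
  linear_combination (((n:ℝ)-2)^2) * key
end

lemma euclidean_integrable_scaled {m : ℕ} {β s : ℝ} (hs : 0 < s) (h : (m:ℝ) < 2*β) :
    Integrable (fun y : EuclideanSpace ℝ (Fin m) => (s^2+‖y‖^2)^(-β)) := by
  refine (MeasureTheory.integrable_comp_smul_iff (volume : Measure (EuclideanSpace ℝ (Fin m)))
    (fun y : EuclideanSpace ℝ (Fin m) => (s^2+‖y‖^2)^(-β)) hs.ne').mp ?_
  have heq : ∀ x : EuclideanSpace ℝ (Fin m),
      (s^2+‖s • x‖^2)^(-β) = s ^ (-2*β) * (1+‖x‖^2)^(-β) := by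
    intro x
    have h1 : ‖s • x‖^2 = s^2 * ‖x‖^2 := by
      rw [norm_smul, mul_pow, Real.norm_eq_abs, sq_abs]
    have h2 : s^2 + ‖s • x‖^2 = s^2 * (1+‖x‖^2) := by rw [h1]; ring
    rw [h2, Real.mul_rpow (by positivity) (by positivity)]
    congr 1
    rw [← rpow_natCast s 2, ← rpow_mul hs.le]
    norm_num
  simp only [heq]
  exact (euclidean_integrable h).const_mul _

lemma gradSq_nonneg (n : ℕ) (y : EuclideanSpace ℝ (Fin (n-1))) (t : ℝ) : 0 ≤ gradSq n y t := by
  rw [gradSq, tanGradSq, normDerSq]; positivity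

lemma tanGradSq_nonneg (n : ℕ) (y : EuclideanSpace ℝ (Fin (n-1))) (t : ℝ) : 0 ≤ tanGradSq n y t := by
  rw [tanGradSq]; positivity

lemma normDerSq_nonneg (n : ℕ) (y : EuclideanSpace ℝ (Fin (n-1))) (t : ℝ) : 0 ≤ normDerSq n y t := by
  rw [normDerSq]; positivity


/-- First-moment relations `𝔤⁽¹⁾ = Θ/2`, `𝔤⁽¹⁾_tan = 𝔤⁽¹⁾_normal = Θ/4` for the Escobar
half-space optimizer in dimensions `n ≥ 4`, together with finiteness of all integrals. -/
theorem first_moment_relations_halfspace_bubble (n : ℕ) (hn : 4 ≤ n) :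
    ((∫⁻ t in Set.Ioi (0 : ℝ), ∫⁻ y : EuclideanSpace ℝ (Fin (n - 1)),
        ENNReal.ofReal (t * gradSq n y t)) < ⊤)
    ∧ ((∫⁻ t in Set.Ioi (0 : ℝ), ∫⁻ y : EuclideanSpace ℝ (Fin (n - 1)),
        ENNReal.ofReal (t * tanGradSq n y t)) < ⊤)
    ∧ ((∫⁻ t in Set.Ioi (0 : ℝ), ∫⁻ y : EuclideanSpace ℝ (Fin (n - 1)),
        ENNReal.ofReal (t * normDerSq n y t)) < ⊤)
    ∧ ((∫⁻ y : EuclideanSpace ℝ (Fin (n - 1)),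
        ENNReal.ofReal ((1 + ‖y‖ ^ 2) ^ (-((n : ℝ) - 2)))) < ⊤)
    ∧ ((∫ t in Set.Ioi (0 : ℝ), ∫ y : EuclideanSpace ℝ (Fin (n - 1)), t * gradSq n y t)
        = (∫ y : EuclideanSpace ℝ (Fin (n - 1)), (1 + ‖y‖ ^ 2) ^ (-((n : ℝ) - 2))) / 2)
    ∧ ((∫ t in Set.Ioi (0 : ℝ), ∫ y : EuclideanSpace ℝ (Fin (n - 1)), t * tanGradSq n y t)
        = (∫ y : EuclideanSpace ℝ (Fin (n - 1)), (1 + ‖y‖ ^ 2) ^ (-((n : ℝ) - 2))) / 4)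
    ∧ ((∫ t in Set.Ioi (0 : ℝ), ∫ y : EuclideanSpace ℝ (Fin (n - 1)), t * normDerSq n y t)
        = (∫ y : EuclideanSpace ℝ (Fin (n - 1)), (1 + ‖y‖ ^ 2) ^ (-((n : ℝ) - 2))) / 4) := by

  have hn4 : (4:ℝ) ≤ (n:ℝ) := by exact_mod_cast hn
  have hmcast : ((n-1 : ℕ):ℝ) = (n:ℝ) - 1 := by
    rw [Nat.cast_sub (by omega : 1 ≤ n)]; norm_num
  have hne2 : (n:ℝ) - 2 ≠ 0 := by intro hc; linarith
  have hne3 : (n:ℝ) - 3 ≠ 0 := by intro hc; linarith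
  have hne1 : (n:ℝ) - 1 ≠ 0 := by intro hc; linarith
  set Θ := ∫ y : EuclideanSpace ℝ (Fin (n-1)), (1+‖y‖^2)^(-((n:ℝ)-2)) with hΘdef
  set c1 := ∫ y : EuclideanSpace ℝ (Fin (n-1)), (1+‖y‖^2)^(-((n:ℝ)-1)) with hc1def
  set c2 := ∫ y : EuclideanSpace ℝ (Fin (n-1)), (1+‖y‖^2)^(-(n:ℝ)) with hc2def
  -- recurrences
  have hc1 : c1 = ((2*((n:ℝ)-2) - ((n:ℝ)-1))/(2*((n:ℝ)-2))) * Θ := by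
    have h := euclidean_recurrence (m := n-1) (by omega) (β := (n:ℝ)-2)
      (by rw [hmcast]; linarith)
    rw [hmcast] at h
    rw [show -(((n:ℝ)-2)+1) = -((n:ℝ)-1) from by ring] at h
    exact h
  have hc2 : c2 = ((2*((n:ℝ)-1) - ((n:ℝ)-1))/(2*((n:ℝ)-1))) * c1 := by
    have h := euclidean_recurrence (m := n-1) (by omega) (β := (n:ℝ)-1)
      (by rw [hmcast]; linarith)
    rw [hmcast] at h
    rw [show -(((n:ℝ)-1)+1) = -(n:ℝ) from by ring] at h
    exact h
  have hc2' : c2 = c1/2 := by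
    rw [hc2]
    rw [show (2*((n:ℝ)-1) - ((n:ℝ)-1))/(2*((n:ℝ)-1)) = 1/2 from by field_simp; ring]
    ring
  have hΘnn : 0 ≤ Θ := integral_nonneg fun y => rpow_nonneg (by positivity) _
  have hc1nn : 0 ≤ c1 := integral_nonneg fun y => rpow_nonneg (by positivity) _
  have hc2nn : 0 ≤ c2 := integral_nonneg fun y => rpow_nonneg (by positivity) _
  have hc12nn : 0 ≤ c1 - c2 := by rw [hc2']; linarith
  -- pointwise rewrites of the integrands
  have hfunA : ∀ t : ℝ, 0 ≤ t → (fun y : EuclideanSpace ℝ (Fin (n-1)) => t * gradSq n y t)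
      = fun y => (t * ((n:ℝ)-2)^2) * (((1+t)^2+‖y‖^2)^(-((n:ℝ)-1))) := by
    intro t ht; funext y; rw [gradSq_eq n y t hn ht]; ring
  have hfunN : ∀ t : ℝ, 0 ≤ t → (fun y : EuclideanSpace ℝ (Fin (n-1)) => t * normDerSq n y t)
      = fun y => (t * ((n:ℝ)-2)^2 * (1+t)^2) * (((1+t)^2+‖y‖^2)^(-(n:ℝ))) := by
    intro t ht; funext y; rw [normDerSq_eq n y t hn ht]; ring
  -- inner integrability
  have hintA : ∀ t : ℝ, 0 < t →
      Integrable (fun y : EuclideanSpace ℝ (Fin (n-1)) => t * gradSq n y t) := by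
    intro t ht
    rw [hfunA t ht.le]
    exact (euclidean_integrable_scaled (by linarith) (by rw [hmcast]; linarith)).const_mul _
  have hintN : ∀ t : ℝ, 0 < t →
      Integrable (fun y : EuclideanSpace ℝ (Fin (n-1)) => t * normDerSq n y t) := by
    intro t ht
    rw [hfunN t ht.le]
    exact (euclidean_integrable_scaled (by linarith) (by rw [hmcast]; linarith)).const_mul _
  have hintT : ∀ t : ℝ, 0 < t →
      Integrable (fun y : EuclideanSpace ℝ (Fin (n-1)) => t * tanGradSq n y t) := by
    intro t ht
    refine ((hintA t ht).sub (hintN t ht)).congr (ae_of_all _ fun y => ?_)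
    simp only [Pi.sub_apply, gradSq]; ring
  -- inner values
  have hvalA : ∀ t : ℝ, 0 < t →
      (∫ y : EuclideanSpace ℝ (Fin (n-1)), t * gradSq n y t)
        = (((n:ℝ)-2)^2 * c1) * (t * (1+t)^(-((n:ℝ)-1))) := by
    intro t ht
    rw [hfunA t ht.le, integral_const_mul, euclidean_scaling (by linarith : (0:ℝ) < 1+t),
      hmcast, ← hc1def]
    rw [show ((n:ℝ)-1) - 2*((n:ℝ)-1) = -((n:ℝ)-1) from by ring]
    ring
  have hvalN : ∀ t : ℝ, 0 < t →
      (∫ y : EuclideanSpace ℝ (Fin (n-1)), t * normDerSq n y t)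
        = (((n:ℝ)-2)^2 * c2) * (t * (1+t)^(-((n:ℝ)-1))) := by
    intro t ht
    have h1t : (0:ℝ) < 1 + t := by linarith
    rw [hfunN t ht.le, integral_const_mul, euclidean_scaling h1t, hmcast, ← hc2def]
    have hp : (1+t)^2 * (1+t)^(((n:ℝ)-1) - 2*(n:ℝ)) = (1+t)^(-((n:ℝ)-1)) := by
      rw [← rpow_natCast (1+t) 2, ← rpow_add h1t]
      congr 1; push_cast; ring
    linear_combination (t*((n:ℝ)-2)^2*c2) * hp
  have hvalT : ∀ t : ℝ, 0 < t →
      (∫ y : EuclideanSpace ℝ (Fin (n-1)), t * tanGradSq n y t)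
        = (((n:ℝ)-2)^2 * (c1 - c2)) * (t * (1+t)^(-((n:ℝ)-1))) := by
    intro t ht
    have hsub : (fun y : EuclideanSpace ℝ (Fin (n-1)) => t * tanGradSq n y t)
        = fun y => t * gradSq n y t - t * normDerSq n y t := by
      funext y; rw [gradSq]; ring
    rw [hsub, integral_sub (hintA t ht) (hintN t ht), hvalA t ht, hvalN t ht]; ring
  -- the outer 1-dimensional integral
  have KInt : IntegrableOn (fun t : ℝ => t * (1+t)^(-((n:ℝ)-1))) (Set.Ioi (0:ℝ)) :=
    integrableOn_linear_mul_one_add (by linarith)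
  have Kval : ∫ t in Set.Ioi (0:ℝ), t * (1+t)^(-((n:ℝ)-1))
      = 1/((((n:ℝ)-1)-1)*(((n:ℝ)-1)-2)) := integral_linear_mul_one_add (by linarith)
  -- outer Bochner values
  have houter : ∀ c : ℝ,
      (∫ t in Set.Ioi (0:ℝ), (((n:ℝ)-2)^2 * c) * (t * (1+t)^(-((n:ℝ)-1))))
        = (((n:ℝ)-2)^2 * c) * (1/((((n:ℝ)-1)-1)*(((n:ℝ)-1)-2))) := by
    intro c; rw [integral_const_mul, Kval]
  have houterA : (∫ t in Set.Ioi (0:ℝ), ∫ y : EuclideanSpace ℝ (Fin (n-1)), t * gradSq n y t)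
      = (((n:ℝ)-2)^2 * c1) * (1/((((n:ℝ)-1)-1)*(((n:ℝ)-1)-2))) := by
    rw [setIntegral_congr_fun measurableSet_Ioi (fun t ht => hvalA t ht), houter]
  have houterN : (∫ t in Set.Ioi (0:ℝ), ∫ y : EuclideanSpace ℝ (Fin (n-1)), t * normDerSq n y t)
      = (((n:ℝ)-2)^2 * c2) * (1/((((n:ℝ)-1)-1)*(((n:ℝ)-1)-2))) := by
    rw [setIntegral_congr_fun measurableSet_Ioi (fun t ht => hvalN t ht), houter]
  have houterT : (∫ t in Set.Ioi (0:ℝ), ∫ y : EuclideanSpace ℝ (Fin (n-1)), t * tanGradSq n y t)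
      = (((n:ℝ)-2)^2 * (c1 - c2)) * (1/((((n:ℝ)-1)-1)*(((n:ℝ)-1)-2))) := by
    rw [setIntegral_congr_fun measurableSet_Ioi (fun t ht => hvalT t ht), houter]
  -- lintegral finiteness, via the same computations
  have hfin : ∀ (X : (EuclideanSpace ℝ (Fin (n-1))) → ℝ → ℝ) (c : ℝ), 0 ≤ c →
      (∀ y t, 0 ≤ X y t) →
      (∀ t : ℝ, 0 < t → Integrable (fun y : EuclideanSpace ℝ (Fin (n-1)) => t * X y t)) →
      (∀ t : ℝ, 0 < t → (∫ y : EuclideanSpace ℝ (Fin (n-1)), t * X y t)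
          = (((n:ℝ)-2)^2 * c) * (t * (1+t)^(-((n:ℝ)-1)))) →
      (∫⁻ t in Set.Ioi (0 : ℝ), ∫⁻ y : EuclideanSpace ℝ (Fin (n - 1)),
        ENNReal.ofReal (t * X y t)) < ⊤ := by
    intro X c hc hXnn hXint hXval
    have hstep : ∀ᵐ t : ℝ ∂(volume : Measure ℝ), t ∈ Set.Ioi (0:ℝ) →
        (∫⁻ y : EuclideanSpace ℝ (Fin (n-1)), ENNReal.ofReal (t * X y t))
          = ENNReal.ofReal ((((n:ℝ)-2)^2 * c) * (t * (1+t)^(-((n:ℝ)-1)))) := by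
      refine ae_of_all _ fun t ht => ?_
      rw [← ofReal_integral_eq_lintegral_ofReal (hXint t ht)
        (ae_of_all _ fun y => mul_nonneg (le_of_lt ht) (hXnn y t)), hXval t ht]
    have hnn : 0 ≤ᵐ[volume.restrict (Set.Ioi (0:ℝ))]
        fun t : ℝ => (((n:ℝ)-2)^2 * c) * (t * (1+t)^(-((n:ℝ)-1))) := by
      filter_upwards [ae_restrict_mem measurableSet_Ioi] with t ht
      have h1t : (0:ℝ) < 1 + t := by simp only [Set.mem_Ioi] at ht; linarith
      have ht0 : (0:ℝ) ≤ t := by simp only [Set.mem_Ioi] at ht; linarith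
      have hr := rpow_nonneg h1t.le (-((n:ℝ)-1))
      positivity
    calc (∫⁻ t in Set.Ioi (0 : ℝ), ∫⁻ y : EuclideanSpace ℝ (Fin (n - 1)),
          ENNReal.ofReal (t * X y t))
        = ∫⁻ t in Set.Ioi (0 : ℝ),
            ENNReal.ofReal ((((n:ℝ)-2)^2 * c) * (t * (1+t)^(-((n:ℝ)-1)))) :=
          setLIntegral_congr_fun_ae measurableSet_Ioi hstep
      _ = ENNReal.ofReal (∫ t in Set.Ioi (0:ℝ),
            (((n:ℝ)-2)^2 * c) * (t * (1+t)^(-((n:ℝ)-1)))) :=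
          (ofReal_integral_eq_lintegral_ofReal (KInt.const_mul _) hnn).symm
      _ < ⊤ := ENNReal.ofReal_lt_top
  refine ⟨?_, ?_, ?_, ?_, ?_, ?_, ?_⟩
  · exact hfin (fun y t => gradSq n y t) c1 hc1nn (fun y t => gradSq_nonneg n y t) hintA hvalA
  · exact hfin (fun y t => tanGradSq n y t) (c1-c2) hc12nn
      (fun y t => tanGradSq_nonneg n y t) hintT hvalT
  · exact hfin (fun y t => normDerSq n y t) c2 hc2nn (fun y t => normDerSq_nonneg n y t) hintN hvalN
  · rw [← ofReal_integral_eq_lintegral_ofReal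
      (euclidean_integrable (m := n-1) (β := (n:ℝ)-2) (by rw [hmcast]; linarith))
      (ae_of_all _ fun y => rpow_nonneg (by positivity) _)]
    exact ENNReal.ofReal_lt_top
  · rw [houterA, hc1, show 2*((n:ℝ)-2) - ((n:ℝ)-1) = (n:ℝ)-3 from by ring,
      show (((n:ℝ)-1)-1)*(((n:ℝ)-1)-2) = ((n:ℝ)-2)*((n:ℝ)-3) from by ring]
    field_simp [hne2, hne3]
  · rw [houterT, hc2', hc1, show 2*((n:ℝ)-2) - ((n:ℝ)-1) = (n:ℝ)-3 from by ring,
      show (((n:ℝ)-1)-1)*(((n:ℝ)-1)-2) = ((n:ℝ)-2)*((n:ℝ)-3) from by ring]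
    field_simp [hne2, hne3]
    ring
  · rw [houterN, hc2', hc1, show 2*((n:ℝ)-2) - ((n:ℝ)-1) = (n:ℝ)-3 from by ring,
      show (((n:ℝ)-1)-1)*(((n:ℝ)-1)-2) = ((n:ℝ)-2)*((n:ℝ)-3) from by ring]
    field_simp [hne2, hne3]
    ring
end

section
/- Let n ≥ 5 and let U₊ be the standard half-space bubble. Then ∫_{ℝⁿ₊} t²·‖∇′U₊(y′,t)‖² dy′ dt = (1/2)·∫_{ℝⁿ₊} t²·‖∇U₊(y′,t)‖² dy′ dt, and equivalently the normal part carries the other half: ∫_{ℝⁿ₊} t²·(∂ₜU₊(y′,t))² dy′ dt = (1/2)·∫_{ℝⁿ₊} t²·‖∇U₊(y′,t)‖² dy′ dt. All these integrals are finite. -/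
open MeasureTheory Real Set Module

namespace SecondMomentAux

lemma key1d (n m : ℕ) (hm : 1 ≤ m) (hmn : m + 1 = n) :
    ∫ r in Ioi (0:ℝ), r ^ (m+1) * (1+r^2) ^ (-(n:ℝ)) =
    ∫ r in Ioi (0:ℝ), r ^ (m-1) * (1+r^2) ^ (-(n:ℝ)) := by
  have := MeasureTheory.integral_comp_rpow_Ioi
    (fun r : ℝ => r ^ (m+1) * (1+r^2) ^ (-(n:ℝ))) (p := -1) (by norm_num)
  rw [← this]
  refine setIntegral_congr_fun measurableSet_Ioi (fun x hx => ?_)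
  have hx0 : (0:ℝ) < x := hx
  have hx2 : (0:ℝ) < x^2 := by positivity
  have h1 : x ^ (-1:ℝ) = x⁻¹ := Real.rpow_neg_one x
  have h2 : x ^ ((-1:ℝ)-1) = (x^2)⁻¹ := by
    rw [show ((-1:ℝ)-1) = -(2:ℕ) by norm_num, Real.rpow_neg hx0.le, Real.rpow_natCast]
  have h3 : (1 + (x⁻¹)^2) = (1+x^2)/x^2 := by field_simp; ring
  have h4 : ((1+x^2)/x^2 : ℝ) ^ (-(n:ℝ)) = (1+x^2) ^ (-(n:ℝ)) * x ^ (2*n) := by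
    rw [Real.div_rpow (by positivity) hx2.le, div_eq_mul_inv, ← Real.rpow_neg hx2.le, neg_neg,
      Real.rpow_natCast, ← pow_mul]
  have hpow : x ^ (2*n) = x ^ (m+1) * x^2 * x ^ (m-1) := by
    rw [← pow_add, ← pow_add]; congr 1; omega
  simp only [smul_eq_mul, h1, h2]
  rw [h3, h4, hpow]
  have hb : (0:ℝ) < (1+x^2) ^ (-(n:ℝ)) := Real.rpow_pos_of_pos (by positivity) _
  field_simp
  ring_nf
  rw [inv_pow, mul_right_comm x, mul_inv_cancel₀ hx0.ne', one_mul, mul_inv_cancel₀ (pow_ne_zero _ hx0.ne')]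

lemma keyRadial (n m : ℕ) (hm : 1 ≤ m) (hmn : m + 1 = n) :
    ∫ z : EuclideanSpace ℝ (Fin m), ‖z‖^2 * (1+‖z‖^2) ^ (-(n:ℝ)) =
    ∫ z : EuclideanSpace ℝ (Fin m), (1+‖z‖^2) ^ (-(n:ℝ)) := by
  haveI : Nonempty (Fin m) := ⟨⟨0, hm⟩⟩
  haveI : Nontrivial (EuclideanSpace ℝ (Fin m)) := by
    refine nontrivial_of_ne (EuclideanSpace.single ⟨0, hm⟩ (1:ℝ)) 0 ?_
    intro h
    have := congrArg (fun v : EuclideanSpace ℝ (Fin m) => v ⟨0, hm⟩) h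
    simp [EuclideanSpace.single_apply] at this
  have h1 := MeasureTheory.integral_fun_norm_addHaar (volume : Measure (EuclideanSpace ℝ (Fin m)))
    (fun r : ℝ => r^2 * (1+r^2) ^ (-(n:ℝ)))
  have h2 := MeasureTheory.integral_fun_norm_addHaar (volume : Measure (EuclideanSpace ℝ (Fin m)))
    (fun r : ℝ => (1+r^2) ^ (-(n:ℝ)))
  simp only [finrank_euclideanSpace_fin] at h1 h2
  rw [h1, h2]
  congr 1
  congr 1
  rw [show (∫ y in Ioi (0:ℝ), y ^ (m-1) • (y^2 * (1+y^2) ^ (-(n:ℝ)))) =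
      ∫ r in Ioi (0:ℝ), r ^ (m+1) * (1+r^2) ^ (-(n:ℝ)) from ?_,
    key1d n m hm hmn]
  · refine setIntegral_congr_fun measurableSet_Ioi (fun x hx => ?_) |>.symm
    simp only [smul_eq_mul]
  · refine setIntegral_congr_fun measurableSet_Ioi (fun x hx => ?_)
    simp only [smul_eq_mul]
    rw [show x ^ (m-1) * (x^2 * (1+x^2) ^ (-(n:ℝ))) = (x^(m-1)*x^2) * (1+x^2) ^ (-(n:ℝ)) by ring,
      ← pow_add]
    congr 2
    omega

lemma tanGradSq_eq (n : ℕ) (y : EuclideanSpace ℝ (Fin (n - 1))) {t : ℝ} (ht : 0 < t) :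
    tanGradSq n y t = ((n:ℝ)-2)^2 * (‖y‖^2 * (‖y‖^2 + (1+t)^2) ^ (-(n:ℝ))) := by
  set R : ℝ := ‖y‖^2 + (1+t)^2 with hRdef
  have hR : 0 < R := by positivity
  set β : ℝ := -(((n:ℝ)-2)/2) with hβ
  have hbase : HasFDerivAt (fun y' : EuclideanSpace ℝ (Fin (n-1)) => ‖y'‖^2 + (1+t)^2)
      ((2:ℝ) • (innerSL ℝ y)) y := by
    have h := (hasStrictFDerivAt_norm_sq y).hasFDerivAt.add_const ((1+t)^2)
    rw [← Nat.cast_smul_eq_nsmul ℝ] at h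
    exact_mod_cast h
  have hU : HasFDerivAt (fun y' => Uplus n y' t)
      ((β * R ^ (β-1)) • ((2:ℝ) • (innerSL ℝ y))) y :=
    hbase.rpow_const (Or.inl hR.ne')
  rw [tanGradSq, hU.fderiv]
  have hsq : (R ^ (β-1))^2 = R ^ (-(n:ℝ)) := by
    rw [← Real.rpow_natCast (R ^ (β-1)) 2, ← Real.rpow_mul hR.le]
    congr 1
    push_cast [hβ]
    ring
  rw [norm_smul, norm_smul, innerSL_apply_norm, Real.norm_eq_abs, Real.norm_eq_abs,
    mul_pow, mul_pow, sq_abs, sq_abs, mul_pow, hsq, hβ]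
  norm_num
  ring

lemma normDerSq_eq (n : ℕ) (y : EuclideanSpace ℝ (Fin (n - 1))) {t : ℝ} (ht : 0 < t) :
    normDerSq n y t = ((n:ℝ)-2)^2 * ((1+t)^2 * (‖y‖^2 + (1+t)^2) ^ (-(n:ℝ))) := by
  set R : ℝ := ‖y‖^2 + (1+t)^2 with hRdef
  have hR : 0 < R := by positivity
  set β : ℝ := -(((n:ℝ)-2)/2) with hβ
  have hbase : HasDerivAt (fun t' : ℝ => ‖y‖^2 + (1+t')^2) (2*(1+t)) t := by
    have : HasDerivAt (fun t' : ℝ => (1+t')^2) (2*(1+t)) t := by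
      simpa using ((hasDerivAt_id t).const_add (1:ℝ)).fun_pow 2
    simpa using this.const_add (‖y‖^2)
  have hU : HasDerivAt (fun t' => Uplus n y t') (2*(1+t) * β * R ^ (β-1)) t :=
    hbase.rpow_const (Or.inl hR.ne')
  rw [normDerSq, hU.deriv]
  have hsq : (R ^ (β-1))^2 = R ^ (-(n:ℝ)) := by
    rw [← Real.rpow_natCast (R ^ (β-1)) 2, ← Real.rpow_mul hR.le]
    congr 1
    push_cast [hβ]
    ring
  rw [mul_pow, mul_pow, hsq, hβ]
  ring

lemma dom_int (m : ℕ) (a : ℝ) (ha : (m:ℝ) < 2*a) :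
    Integrable (fun z : EuclideanSpace ℝ (Fin m) => (1+‖z‖^2) ^ (-a)) := by
  have := integrable_rpow_neg_one_add_norm_sq (E := EuclideanSpace ℝ (Fin m))
    (μ := volume) (r := 2*a) (by rw [finrank_euclideanSpace_fin]; linarith)
  simpa [neg_div, mul_div_assoc, mul_div_cancel_left₀] using this

lemma cont_base {m : ℕ} (s : ℝ) (hs : 0 < s) :
    Continuous (fun z : EuclideanSpace ℝ (Fin m) => (‖z‖^2+s^2) ^ (-(m+1:ℝ))) := by
  refine Continuous.rpow_const (by continuity) (fun z => Or.inl (by positivity))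

lemma intB (m : ℕ) (hm : 1 ≤ m) (s : ℝ) (hs : 1 ≤ s) :
    Integrable (fun z : EuclideanSpace ℝ (Fin m) => (‖z‖^2+s^2) ^ (-(m+1:ℝ))) := by
  have hs0 : (0:ℝ) < s := lt_of_lt_of_le one_pos hs
  refine (dom_int m (m+1) (by linarith)).mono'
    ((cont_base s hs0).aestronglyMeasurable) (Filter.Eventually.of_forall fun z => ?_)
  have h1 : (1:ℝ) + ‖z‖^2 ≤ ‖z‖^2 + s^2 := by nlinarith [norm_nonneg z, sq_nonneg (s-1)]
  rw [Real.norm_eq_abs, abs_of_nonneg (Real.rpow_nonneg (by positivity) _)]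
  exact Real.rpow_le_rpow_of_nonpos (by positivity) h1 (by linarith)

lemma intA (m : ℕ) (hm : 1 ≤ m) (s : ℝ) (hs : 1 ≤ s) :
    Integrable (fun z : EuclideanSpace ℝ (Fin m) => ‖z‖^2 * (‖z‖^2+s^2) ^ (-(m+1:ℝ))) := by
  have hs0 : (0:ℝ) < s := lt_of_lt_of_le one_pos hs
  have hm2 : (m:ℝ) < 2*m := by
    have : (1:ℝ) ≤ m := by exact_mod_cast hm
    linarith
  refine (dom_int m m hm2).mono'
    (((continuous_norm.pow 2).mul (cont_base s hs0)).aestronglyMeasurable)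
    (Filter.Eventually.of_forall fun z => ?_)
  have hz : (0:ℝ) ≤ ‖z‖^2 := by positivity
  have h1 : (1:ℝ) + ‖z‖^2 ≤ ‖z‖^2 + s^2 := by nlinarith [sq_nonneg (s-1)]
  have h2 : (‖z‖^2+s^2) ^ (-(m+1:ℝ)) ≤ (1+‖z‖^2) ^ (-(m+1:ℝ)) :=
    Real.rpow_le_rpow_of_nonpos (by positivity) h1 (by linarith)
  have h3 : ‖z‖^2 * (1+‖z‖^2) ^ (-(m+1:ℝ)) ≤ (1+‖z‖^2) ^ (-(m:ℝ)) := by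
    have he : (-(m:ℝ)) = 1 + (-(m+1:ℝ)) := by ring
    rw [he, Real.rpow_add (by positivity), Real.rpow_one]
    have hp : (0:ℝ) ≤ (1+‖z‖^2) ^ (-(m+1:ℝ)) := Real.rpow_nonneg (by positivity) _
    nlinarith
  rw [Real.norm_eq_abs, abs_of_nonneg (by positivity)]
  calc ‖z‖^2 * (‖z‖^2+s^2) ^ (-(m+1:ℝ)) ≤ ‖z‖^2 * (1+‖z‖^2) ^ (-(m+1:ℝ)) := by
        exact mul_le_mul_of_nonneg_left h2 hz
    _ ≤ (1+‖z‖^2) ^ (-(m:ℝ)) := h3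

lemma scaleGen (m : ℕ) {s : ℝ} (hs : 0 < s) (f : EuclideanSpace ℝ (Fin m) → ℝ) :
    ∫ z, f z = s^m * ∫ z, f (s • z) := by
  rw [Measure.integral_comp_smul volume f s, finrank_euclideanSpace_fin, abs_inv,
    abs_of_pos (pow_pos hs m), smul_eq_mul, ← mul_assoc, mul_inv_cancel₀ (pow_pos hs m).ne',
    one_mul]

lemma norm_smul_sq (m : ℕ) (s : ℝ) (z : EuclideanSpace ℝ (Fin m)) :
    ‖s • z‖^2 = s^2 * ‖z‖^2 := by
  rw [norm_smul, Real.norm_eq_abs, mul_pow, sq_abs]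

lemma scaleB (m : ℕ) {s : ℝ} (hs : 0 < s) :
    ∫ z : EuclideanSpace ℝ (Fin m), (‖z‖^2+s^2) ^ (-(m+1:ℝ)) =
    (s^m * (s^2) ^ (-(m+1:ℝ))) * ∫ z : EuclideanSpace ℝ (Fin m), (1+‖z‖^2) ^ (-(m+1:ℝ)) := by
  rw [scaleGen m hs (fun z => (‖z‖^2+s^2) ^ (-(m+1:ℝ))), mul_assoc]
  congr 1
  rw [← integral_const_mul]
  congr 1
  funext z
  rw [norm_smul_sq m s, show s^2*‖z‖^2 + s^2 = s^2 * (1+‖z‖^2) by ring,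
    Real.mul_rpow (by positivity) (by positivity)]

lemma scaleA (m : ℕ) {s : ℝ} (hs : 0 < s) :
    ∫ z : EuclideanSpace ℝ (Fin m), ‖z‖^2 * (‖z‖^2+s^2) ^ (-(m+1:ℝ)) =
    (s^m * (s^2 * (s^2) ^ (-(m+1:ℝ)))) *
      ∫ z : EuclideanSpace ℝ (Fin m), ‖z‖^2 * (1+‖z‖^2) ^ (-(m+1:ℝ)) := by
  rw [scaleGen m hs (fun z => ‖z‖^2 * (‖z‖^2+s^2) ^ (-(m+1:ℝ))), mul_assoc]
  congr 1
  rw [← integral_const_mul]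
  congr 1
  funext z
  rw [norm_smul_sq m s, show s^2*‖z‖^2 + s^2 = s^2 * (1+‖z‖^2) by ring,
    Real.mul_rpow (by positivity) (by positivity)]
  ring

lemma sqpow (m : ℕ) {s : ℝ} (hs : 0 < s) :
    (s^2:ℝ) ^ (-(m+1:ℝ)) = (s^(2*m+2))⁻¹ := by
  rw [← Real.rpow_natCast s 2, ← Real.rpow_mul hs.le,
    show ((2:ℕ):ℝ) * (-(m+1:ℝ)) = -((2*m+2:ℕ):ℝ) by push_cast; ring,
    Real.rpow_neg hs.le, Real.rpow_natCast]

lemma cval (m : ℕ) {s : ℝ} (hs : 0 < s) :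
    s^m * (s^2 * (s^2) ^ (-(m+1:ℝ))) = (s^m)⁻¹ := by
  rw [sqpow m hs]
  field_simp
  ring

lemma cval' (m : ℕ) {s : ℝ} (hs : 0 < s) :
    s^2 * (s^m * (s^2) ^ (-(m+1:ℝ))) = (s^m)⁻¹ := by
  rw [← cval m hs]; ring

lemma outerInt (m : ℕ) (hm : 4 ≤ m) :
    IntegrableOn (fun t : ℝ => t^2 * ((1+t)^m)⁻¹) (Ioi 0) := by
  have h01 : IntegrableOn (fun t : ℝ => t^2 * ((1+t)^m)⁻¹) (Ioc 0 1) := by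
    have hc : ContinuousOn (fun t : ℝ => t^2 * ((1+t)^m)⁻¹) (Icc 0 1) := by
      refine (continuousOn_pow 2).mul (ContinuousOn.inv₀ (by fun_prop) ?_)
      intro t ht
      have : (0:ℝ) < 1 + t := by linarith [ht.1]
      positivity
    exact (hc.integrableOn_compact isCompact_Icc).mono_set Ioc_subset_Icc_self
  have h1i : IntegrableOn (fun t : ℝ => t^2 * ((1+t)^m)⁻¹) (Ioi 1) := by
    refine (integrableOn_Ioi_rpow_of_lt (a := 2-(m:ℝ)) ?_ one_pos).mono' ?_ ?_
    · have : (4:ℝ) ≤ m := by exact_mod_cast hm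
      linarith
    · refine ContinuousOn.aestronglyMeasurable ?_ measurableSet_Ioi
      refine (continuousOn_pow 2).mul (ContinuousOn.inv₀ (by fun_prop) ?_)
      intro t ht
      have h1 : (1:ℝ) < t := ht
      have : (0:ℝ) < 1 + t := by linarith
      positivity
    · filter_upwards [ae_restrict_mem measurableSet_Ioi] with t ht
      have h1 : (1:ℝ) < t := ht
      have ht0 : (0:ℝ) < t := by linarith
      have hpow : t^m ≤ (1+t)^m := pow_le_pow_left₀ (by linarith) (by linarith) m
      have hb : t^2 * ((1+t)^m)⁻¹ ≤ t^2 * (t^m)⁻¹ := by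
        apply mul_le_mul_of_nonneg_left _ (by positivity)
        exact inv_anti₀ (by positivity) hpow
      rw [Real.norm_eq_abs, abs_of_nonneg (by positivity)]
      refine hb.trans (le_of_eq ?_)
      rw [show (2:ℝ)-(m:ℝ) = ((2:ℕ):ℝ) + (-(m:ℝ)) by push_cast; ring, Real.rpow_add ht0,
        Real.rpow_natCast, Real.rpow_neg ht0.le, Real.rpow_natCast]
  have := h01.union h1i
  rwa [Ioc_union_Ioi_eq_Ioi zero_le_one] at this

end SecondMomentAux

open SecondMomentAux

/-- The tangential `t²`-weighted second moment of the half-space bubble equals half the total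
one, and the normal part carries the other half; all the integrals are finite (`n ≥ 5`). -/
theorem second_moment_split_halfspace_bubble (n : ℕ) (hn : 5 ≤ n) :
    ((∫⁻ t in Set.Ioi (0 : ℝ), ∫⁻ y : EuclideanSpace ℝ (Fin (n - 1)),
        ENNReal.ofReal (t ^ 2 * gradSq n y t)) < ⊤)
    ∧ ((∫⁻ t in Set.Ioi (0 : ℝ), ∫⁻ y : EuclideanSpace ℝ (Fin (n - 1)),
        ENNReal.ofReal (t ^ 2 * tanGradSq n y t)) < ⊤)
    ∧ ((∫⁻ t in Set.Ioi (0 : ℝ), ∫⁻ y : EuclideanSpace ℝ (Fin (n - 1)),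
        ENNReal.ofReal (t ^ 2 * normDerSq n y t)) < ⊤)
    ∧ ((∫ t in Set.Ioi (0 : ℝ), ∫ y : EuclideanSpace ℝ (Fin (n - 1)), t ^ 2 * tanGradSq n y t)
        = (1 / 2) * ∫ t in Set.Ioi (0 : ℝ),
            ∫ y : EuclideanSpace ℝ (Fin (n - 1)), t ^ 2 * gradSq n y t)
    ∧ ((∫ t in Set.Ioi (0 : ℝ), ∫ y : EuclideanSpace ℝ (Fin (n - 1)), t ^ 2 * normDerSq n y t)
        = (1 / 2) * ∫ t in Set.Ioi (0 : ℝ),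
            ∫ y : EuclideanSpace ℝ (Fin (n - 1)), t ^ 2 * gradSq n y t) := by
  have hm4 : 4 ≤ n - 1 := by omega
  have hm1 : 1 ≤ n - 1 := by omega
  have hmn : (n - 1) + 1 = n := by omega
  have hexp : (-(((n-1:ℕ):ℝ)+1)) = -(n:ℝ) := by
    push_cast [Nat.cast_sub (by omega : 1 ≤ n)]
    ring
  set K₀ : ℝ := ∫ z : EuclideanSpace ℝ (Fin (n-1)), (1+‖z‖^2) ^ (-(n:ℝ)) with hK₀def
  set K₁ : ℝ := ∫ z : EuclideanSpace ℝ (Fin (n-1)), ‖z‖^2 * (1+‖z‖^2) ^ (-(n:ℝ)) with hK₁def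
  have hK : K₁ = K₀ := keyRadial n (n-1) hm1 hmn
  -- specialized integrability and scaling with exponent `-(n:ℝ)`
  have intA' : ∀ s : ℝ, 1 ≤ s →
      Integrable (fun z : EuclideanSpace ℝ (Fin (n-1)) => ‖z‖^2 * (‖z‖^2+s^2) ^ (-(n:ℝ))) := by
    intro s hs
    have := intA (n-1) hm1 s hs
    rwa [hexp] at this
  have intB' : ∀ s : ℝ, 1 ≤ s →
      Integrable (fun z : EuclideanSpace ℝ (Fin (n-1)) => (‖z‖^2+s^2) ^ (-(n:ℝ))) := by
    intro s hs
    have := intB (n-1) hm1 s hs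
    rwa [hexp] at this
  have innerA : ∀ s : ℝ, 0 < s →
      (∫ z : EuclideanSpace ℝ (Fin (n-1)), ‖z‖^2 * (‖z‖^2+s^2) ^ (-(n:ℝ)))
        = (s^(n-1))⁻¹ * K₁ := by
    intro s hs
    have h := scaleA (n-1) hs
    rw [hexp] at h
    have hc : s^(n-1) * (s^2 * (s^2:ℝ) ^ (-(n:ℝ))) = (s^(n-1))⁻¹ := by
      rw [← hexp]; exact cval (n-1) hs
    rw [h, hc]
  have innerB : ∀ s : ℝ, 0 < s →
      s^2 * (∫ z : EuclideanSpace ℝ (Fin (n-1)), (‖z‖^2+s^2) ^ (-(n:ℝ)))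
        = (s^(n-1))⁻¹ * K₀ := by
    intro s hs
    have h := scaleB (n-1) hs
    rw [hexp] at h
    have hc : s^2 * (s^(n-1) * (s^2:ℝ) ^ (-(n:ℝ))) = (s^(n-1))⁻¹ := by
      rw [← hexp]; exact cval' (n-1) hs
    rw [h, show s^2 * (s^(n-1) * (s^2:ℝ) ^ (-(n:ℝ)) * K₀) =
      (s^2 * (s^(n-1) * (s^2:ℝ) ^ (-(n:ℝ)))) * K₀ by ring, hc]
  have hs0 : ∀ t : ℝ, 0 < t → (0:ℝ) < 1 + t := fun t ht => by linarith
  have hs1 : ∀ t : ℝ, 0 < t → (1:ℝ) ≤ 1 + t := fun t ht => by linarith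
  have htannn : ∀ (y : EuclideanSpace ℝ (Fin (n-1))) (t : ℝ), 0 ≤ tanGradSq n y t :=
    fun y t => by rw [tanGradSq]; positivity
  have hnormnn : ∀ (y : EuclideanSpace ℝ (Fin (n-1))) (t : ℝ), 0 ≤ normDerSq n y t :=
    fun y t => by rw [normDerSq]; positivity
  have hgradnn : ∀ (y : EuclideanSpace ℝ (Fin (n-1))) (t : ℝ), 0 ≤ gradSq n y t :=
    fun y t => by rw [gradSq]; exact add_nonneg (htannn y t) (hnormnn y t)
  have hTanEq : ∀ t : ℝ, 0 < t →
      (fun y : EuclideanSpace ℝ (Fin (n-1)) => t^2 * tanGradSq n y t)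
      = fun y => (t^2*((n:ℝ)-2)^2) * (‖y‖^2 * (‖y‖^2+(1+t)^2) ^ (-(n:ℝ))) := by
    intro t ht; funext y; rw [tanGradSq_eq n y ht]; ring
  have hNormEq : ∀ t : ℝ, 0 < t →
      (fun y : EuclideanSpace ℝ (Fin (n-1)) => t^2 * normDerSq n y t)
      = fun y => (t^2*((n:ℝ)-2)^2*(1+t)^2) * ((‖y‖^2+(1+t)^2) ^ (-(n:ℝ))) := by
    intro t ht; funext y; rw [normDerSq_eq n y ht]; ring
  have hGradEq : ∀ t : ℝ,
      (fun y : EuclideanSpace ℝ (Fin (n-1)) => t^2 * gradSq n y t)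
      = fun y => (t^2 * tanGradSq n y t) + (t^2 * normDerSq n y t) := by
    intro t; funext y; rw [gradSq]; ring
  have hIntTan : ∀ t : ℝ, 0 < t →
      Integrable (fun y : EuclideanSpace ℝ (Fin (n-1)) => t^2 * tanGradSq n y t) := by
    intro t ht; rw [hTanEq t ht]; exact (intA' (1+t) (hs1 t ht)).const_mul _
  have hIntNorm : ∀ t : ℝ, 0 < t →
      Integrable (fun y : EuclideanSpace ℝ (Fin (n-1)) => t^2 * normDerSq n y t) := by
    intro t ht; rw [hNormEq t ht]; exact (intB' (1+t) (hs1 t ht)).const_mul _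
  have hIntGrad : ∀ t : ℝ, 0 < t →
      Integrable (fun y : EuclideanSpace ℝ (Fin (n-1)) => t^2 * gradSq n y t) := by
    intro t ht; rw [hGradEq t]; exact (hIntTan t ht).add (hIntNorm t ht)
  have hITan : ∀ t : ℝ, 0 < t →
      (∫ y : EuclideanSpace ℝ (Fin (n-1)), t^2 * tanGradSq n y t)
        = (((n:ℝ)-2)^2*K₁) * (t^2 * (((1+t)^(n-1))⁻¹)) := by
    intro t ht
    rw [hTanEq t ht, integral_const_mul, innerA (1+t) (hs0 t ht)]
    ring
  have hINorm : ∀ t : ℝ, 0 < t →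
      (∫ y : EuclideanSpace ℝ (Fin (n-1)), t^2 * normDerSq n y t)
        = (((n:ℝ)-2)^2*K₀) * (t^2 * (((1+t)^(n-1))⁻¹)) := by
    intro t ht
    rw [hNormEq t ht, integral_const_mul]
    have hB := innerB (1+t) (hs0 t ht)
    calc (t^2*((n:ℝ)-2)^2*(1+t)^2) *
          ∫ y : EuclideanSpace ℝ (Fin (n-1)), (‖y‖^2+(1+t)^2) ^ (-(n:ℝ))
        = (t^2*((n:ℝ)-2)^2) * ((1+t)^2 *
          ∫ y : EuclideanSpace ℝ (Fin (n-1)), (‖y‖^2+(1+t)^2) ^ (-(n:ℝ))) := by ring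
      _ = (((n:ℝ)-2)^2*K₀) * (t^2 * (((1+t)^(n-1))⁻¹)) := by rw [hB]; ring
  have hIGrad : ∀ t : ℝ, 0 < t →
      (∫ y : EuclideanSpace ℝ (Fin (n-1)), t^2 * gradSq n y t)
        = (2*((n:ℝ)-2)^2*K₀) * (t^2 * (((1+t)^(n-1))⁻¹)) := by
    intro t ht
    rw [hGradEq t, integral_add (hIntTan t ht) (hIntNorm t ht), hITan t ht, hINorm t ht, hK]
    ring
  -- finiteness helper
  have hfin : ∀ c : ℝ,
      (∫⁻ t in Set.Ioi (0:ℝ), ENNReal.ofReal (c * (t^2 * (((1+t)^(n-1))⁻¹)))) < ⊤ := by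
    intro c
    have : IntegrableOn (fun t : ℝ => c * (t^2 * (((1+t)^(n-1))⁻¹))) (Ioi 0) :=
      (outerInt (n-1) hm4).const_mul c
    exact this.lintegral_lt_top
  have innerLTan : ∀ t : ℝ, 0 < t →
      (∫⁻ y : EuclideanSpace ℝ (Fin (n-1)), ENNReal.ofReal (t^2 * tanGradSq n y t))
        = ENNReal.ofReal ((((n:ℝ)-2)^2*K₁) * (t^2 * (((1+t)^(n-1))⁻¹))) := by
    intro t ht
    rw [← ofReal_integral_eq_lintegral_ofReal (hIntTan t ht)
      (Filter.Eventually.of_forall fun y => mul_nonneg (sq_nonneg t) (htannn y t)), hITan t ht]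
  have innerLNorm : ∀ t : ℝ, 0 < t →
      (∫⁻ y : EuclideanSpace ℝ (Fin (n-1)), ENNReal.ofReal (t^2 * normDerSq n y t))
        = ENNReal.ofReal ((((n:ℝ)-2)^2*K₀) * (t^2 * (((1+t)^(n-1))⁻¹))) := by
    intro t ht
    rw [← ofReal_integral_eq_lintegral_ofReal (hIntNorm t ht)
      (Filter.Eventually.of_forall fun y => mul_nonneg (sq_nonneg t) (hnormnn y t)), hINorm t ht]
  have innerLGrad : ∀ t : ℝ, 0 < t →
      (∫⁻ y : EuclideanSpace ℝ (Fin (n-1)), ENNReal.ofReal (t^2 * gradSq n y t))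
        = ENNReal.ofReal ((2*((n:ℝ)-2)^2*K₀) * (t^2 * (((1+t)^(n-1))⁻¹))) := by
    intro t ht
    rw [← ofReal_integral_eq_lintegral_ofReal (hIntGrad t ht)
      (Filter.Eventually.of_forall fun y => mul_nonneg (sq_nonneg t) (hgradnn y t)), hIGrad t ht]
  refine ⟨?_, ?_, ?_, ?_, ?_⟩
  · rw [setLIntegral_congr_fun measurableSet_Ioi (fun t ht => innerLGrad t ht)]
    exact hfin _
  · rw [setLIntegral_congr_fun measurableSet_Ioi (fun t ht => innerLTan t ht)]
    exact hfin _
  · rw [setLIntegral_congr_fun measurableSet_Ioi (fun t ht => innerLNorm t ht)]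
    exact hfin _
  · have hGrad2 : (∫ t in Set.Ioi (0:ℝ), ∫ y : EuclideanSpace ℝ (Fin (n-1)), t^2 * gradSq n y t)
        = 2 * ∫ t in Set.Ioi (0:ℝ), ∫ y : EuclideanSpace ℝ (Fin (n-1)), t^2 * tanGradSq n y t := by
      rw [setIntegral_congr_fun measurableSet_Ioi
        (show EqOn (fun t : ℝ => ∫ y : EuclideanSpace ℝ (Fin (n-1)), t^2 * gradSq n y t)
          (fun t : ℝ => 2 * ∫ y : EuclideanSpace ℝ (Fin (n-1)), t^2 * tanGradSq n y t) (Ioi 0)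
          from fun t ht => by
            simp only
            rw [hIGrad t ht, hITan t ht, hK]; ring)]
      exact integral_const_mul 2 _
    rw [hGrad2]; ring
  · have hGrad2 : (∫ t in Set.Ioi (0:ℝ), ∫ y : EuclideanSpace ℝ (Fin (n-1)), t^2 * gradSq n y t)
        = 2 * ∫ t in Set.Ioi (0:ℝ), ∫ y : EuclideanSpace ℝ (Fin (n-1)), t^2 * normDerSq n y t := by
      rw [setIntegral_congr_fun measurableSet_Ioi
        (show EqOn (fun t : ℝ => ∫ y : EuclideanSpace ℝ (Fin (n-1)), t^2 * gradSq n y t)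
          (fun t : ℝ => 2 * ∫ y : EuclideanSpace ℝ (Fin (n-1)), t^2 * normDerSq n y t) (Ioi 0)
          from fun t ht => by
            simp only
            rw [hIGrad t ht, hINorm t ht]; ring)]
      exact integral_const_mul 2 _
    rw [hGrad2]; ring
end

section
/- Let S > 0, ρ ≠ 0, ε > 0, M ≥ 0 be real numbers, and let H, R, T, A₁, A₂, A₃ ∈ ℝ satisfy |A_k − S·(ρH + kεR + k²ε²T)| ≤ M·ε³ for k = 1, 2, 3. Define Δ₁ := A₂ − A₁, Δ₂ := A₃ − A₂, Θ̂ := (Δ₂ − Δ₁)/(2Sε²), R̂ := Δ₁/(Sε) − 3εΘ̂, and Ĥ := ρ^{−1}·(A₁/S − εR̂ − ε²Θ̂). Then |Θ̂ − T| ≤ 2(M/S)·ε, |R̂ − R| ≤ 8(M/S)·ε², and |Ĥ − H| ≤ 11·(M/(S·|ρ|))·ε³. -/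
/-!
Each estimator is linear in `(A₁, A₂, A₃)` and exact on the noiseless quadratic model
`k ↦ S (ρH + kεR + k²ε²T)`: `Θ̂` is a second difference, `R̂` a first difference corrected by `Θ̂`,
and `Ĥ` the remaining constant term. So each error is a fixed combination of the three residuals,
each at most `Mε³`, with coefficients of total mass `4 / (2Sε²)`, `16 / (2Sε)` and `14 / (2S|ρ|)`.
-/

theorem abs_lincomb_le (a b c : ℝ) {x y z δ : ℝ} (hx : |x| ≤ δ) (hy : |y| ≤ δ) (hz : |z| ≤ δ) :
    |a * x + b * y + c * z| ≤ (|a| + |b| + |c|) * δ := by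
  calc |a * x + b * y + c * z| ≤ |a| * |x| + |b| * |y| + |c| * |z| := by
        simpa only [abs_mul] using abs_add_three (a * x) (b * y) (c * z)
    _ ≤ |a| * δ + |b| * δ + |c| * δ := by gcongr
    _ = (|a| + |b| + |c|) * δ := by ring

theorem abs_lincomb_div_le (a b c : ℝ) {x y z δ : ℝ} (D : ℝ) (hx : |x| ≤ δ) (hy : |y| ≤ δ)
    (hz : |z| ≤ δ) : |(a * x + b * y + c * z) / D| ≤ (|a| + |b| + |c|) * δ / |D| := by
  rw [abs_div]
  exact div_le_div_of_nonneg_right (abs_lincomb_le a b c hx hy hz) (abs_nonneg D)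

noncomputable section

namespace ThreeScaleDebiasing

variable (S ρ ε : ℝ)

def thetaHat (A₁ A₂ A₃ : ℝ) : ℝ := (A₃ - A₂ - (A₂ - A₁)) / (2 * S * ε ^ 2)

def rHat (A₁ A₂ A₃ : ℝ) : ℝ := (A₂ - A₁) / (S * ε) - 3 * ε * thetaHat S ε A₁ A₂ A₃

def hHat (A₁ A₂ A₃ : ℝ) : ℝ :=
  ρ⁻¹ * (A₁ / S - ε * rHat S ε A₁ A₂ A₃ - ε ^ 2 * thetaHat S ε A₁ A₂ A₃)

def modelEnergy (H R T k : ℝ) : ℝ := S * (ρ * H + k * ε * R + k ^ 2 * ε ^ 2 * T)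

variable {S ρ ε} {M H R T A₁ A₂ A₃ : ℝ}

local notation "e₁" => A₁ - modelEnergy S ρ ε H R T 1
local notation "e₂" => A₂ - modelEnergy S ρ ε H R T 2
local notation "e₃" => A₃ - modelEnergy S ρ ε H R T 3

theorem thetaHat_sub_eq (hS : S ≠ 0) (hε : ε ≠ 0) :
    thetaHat S ε A₁ A₂ A₃ - T = (1 * e₁ + -2 * e₂ + 1 * e₃) / (2 * S * ε ^ 2) := by
  unfold thetaHat modelEnergy
  field_simp
  ring

theorem rHat_sub_eq (hS : S ≠ 0) (hε : ε ≠ 0) :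
    rHat S ε A₁ A₂ A₃ - R = (-5 * e₁ + 8 * e₂ + -3 * e₃) / (2 * S * ε) := by
  unfold rHat thetaHat modelEnergy
  field_simp
  ring

theorem hHat_sub_eq (hS : S ≠ 0) (hρ : ρ ≠ 0) (hε : ε ≠ 0) :
    hHat S ρ ε A₁ A₂ A₃ - H = (6 * e₁ + -6 * e₂ + 2 * e₃) / (2 * S * ρ) := by
  unfold hHat rHat thetaHat modelEnergy
  field_simp
  ring

theorem abs_thetaHat_sub_le (hS : 0 < S) (hε : 0 < ε) (h₁ : |e₁| ≤ M * ε ^ 3)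
    (h₂ : |e₂| ≤ M * ε ^ 3) (h₃ : |e₃| ≤ M * ε ^ 3) :
    |thetaHat S ε A₁ A₂ A₃ - T| ≤ 2 * (M / S) * ε := by
  rw [thetaHat_sub_eq hS.ne' hε.ne']
  refine (abs_lincomb_div_le _ _ _ _ h₁ h₂ h₃).trans_eq ?_
  rw [abs_of_pos (by positivity : 0 < 2 * S * ε ^ 2)]
  norm_num
  field_simp
  ring

theorem abs_rHat_sub_le (hS : 0 < S) (hε : 0 < ε) (h₁ : |e₁| ≤ M * ε ^ 3)
    (h₂ : |e₂| ≤ M * ε ^ 3) (h₃ : |e₃| ≤ M * ε ^ 3) :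
    |rHat S ε A₁ A₂ A₃ - R| ≤ 8 * (M / S) * ε ^ 2 := by
  rw [rHat_sub_eq hS.ne' hε.ne']
  refine (abs_lincomb_div_le _ _ _ _ h₁ h₂ h₃).trans_eq ?_
  rw [abs_of_pos (by positivity : 0 < 2 * S * ε)]
  norm_num
  field_simp
  ring

theorem abs_hHat_sub_le (hS : 0 < S) (hρ : ρ ≠ 0) (hε : 0 < ε) (h₁ : |e₁| ≤ M * ε ^ 3)
    (h₂ : |e₂| ≤ M * ε ^ 3) (h₃ : |e₃| ≤ M * ε ^ 3) :
    |hHat S ρ ε A₁ A₂ A₃ - H| ≤ 7 * (M / (S * |ρ|)) * ε ^ 3 := by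
  rw [hHat_sub_eq hS.ne' hρ hε.ne']
  refine (abs_lincomb_div_le _ _ _ _ h₁ h₂ h₃).trans_eq ?_
  rw [abs_mul, abs_mul, abs_two, abs_of_pos hS]
  norm_num
  field_simp
  ring

end ThreeScaleDebiasing

end

open ThreeScaleDebiasing in
theorem three_scale_debiasing_general (S ρ ε M H R T A1 A2 A3 Δ1 Δ2 Θhat Rhat Hhat : ℝ)
    (hS : 0 < S) (hρ : ρ ≠ 0) (hε : 0 < ε)
    (h1 : |A1 - S * (ρ * H + 1 * ε * R + 1 ^ 2 * ε ^ 2 * T)| ≤ M * ε ^ 3)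
    (h2 : |A2 - S * (ρ * H + 2 * ε * R + 2 ^ 2 * ε ^ 2 * T)| ≤ M * ε ^ 3)
    (h3 : |A3 - S * (ρ * H + 3 * ε * R + 3 ^ 2 * ε ^ 2 * T)| ≤ M * ε ^ 3)
    (hΔ1 : Δ1 = A2 - A1) (hΔ2 : Δ2 = A3 - A2)
    (hΘ : Θhat = (Δ2 - Δ1) / (2 * S * ε ^ 2))
    (hR : Rhat = Δ1 / (S * ε) - 3 * ε * Θhat)
    (hH : Hhat = ρ⁻¹ * (A1 / S - ε * Rhat - ε ^ 2 * Θhat)) :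
    |Θhat - T| ≤ 2 * (M / S) * ε
    ∧ |Rhat - R| ≤ 8 * (M / S) * ε ^ 2
    ∧ |Hhat - H| ≤ 11 * (M / (S * |ρ|)) * ε ^ 3 := by
  subst hH hR hΘ hΔ1 hΔ2
  have hMε : 0 ≤ M / (S * |ρ|) * ε ^ 3 := by
    rw [div_mul_eq_mul_div]
    exact div_nonneg ((abs_nonneg _).trans h1) (by positivity)
  refine ⟨abs_thetaHat_sub_le hS hε h1 h2 h3, abs_rHat_sub_le hS hε h1 h2 h3, ?_⟩
  calc _ ≤ 7 * (M / (S * |ρ|)) * ε ^ 3 := abs_hHat_sub_le hS hρ hε h1 h2 h3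
    _ ≤ 11 * (M / (S * |ρ|)) * ε ^ 3 := by linarith

/-- Algebraic core of the three-scale, projection-free de-biasing estimators: from
measurements `A_k` with `|A_k − S·(ρH + kεR + k²ε²T)| ≤ M·ε³` (`k = 1,2,3`), the
estimators `Θ̂`, `R̂`, `Ĥ` recover `T`, `R`, `H` with the stated rates. -/
theorem three_scale_debiasing (S ρ ε M H R T A1 A2 A3 Δ1 Δ2 Θhat Rhat Hhat : ℝ)
    (hS : 0 < S) (hρ : ρ ≠ 0) (hε : 0 < ε) (hM : 0 ≤ M)
    (h1 : |A1 - S * (ρ * H + 1 * ε * R + 1 ^ 2 * ε ^ 2 * T)| ≤ M * ε ^ 3)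
    (h2 : |A2 - S * (ρ * H + 2 * ε * R + 2 ^ 2 * ε ^ 2 * T)| ≤ M * ε ^ 3)
    (h3 : |A3 - S * (ρ * H + 3 * ε * R + 3 ^ 2 * ε ^ 2 * T)| ≤ M * ε ^ 3)
    (hΔ1 : Δ1 = A2 - A1) (hΔ2 : Δ2 = A3 - A2)
    (hΘ : Θhat = (Δ2 - Δ1) / (2 * S * ε ^ 2))
    (hR : Rhat = Δ1 / (S * ε) - 3 * ε * Θhat)
    (hH : Hhat = ρ⁻¹ * (A1 / S - ε * Rhat - ε ^ 2 * Θhat)) :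
    |Θhat - T| ≤ 2 * (M / S) * ε
    ∧ |Rhat - R| ≤ 8 * (M / S) * ε ^ 2
    ∧ |Hhat - H| ≤ 11 * (M / (S * |ρ|)) * ε ^ 3 :=
  three_scale_debiasing_general S ρ ε M H R T A1 A2 A3 Δ1 Δ2 Θhat Rhat Hhat hS hρ hε h1 h2 h3 hΔ1
    hΔ2 hΘ hR hH
end

section
/- Let m ∈ (0,1), λ > 0, T > 0 be real numbers. Let y : [0,T] → ℝ be continuous on [0,T], differentiable on (0,T), with y(t) ≥ 0 for all t ∈ [0,T], y′(t) ≥ −λ·y(t)^m for all t ∈ (0,T), and y(T) = 0. Then T ≥ y(0)^{1−m} / ((1−m)·λ). -/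
/-- ODE core of the extinction-time lower bound: if `y ≥ 0` is continuous on `[0,T]`,
differentiable on `(0,T)` with `y′ ≥ −λ·y^m` (`0 < m < 1`, `λ > 0`) and `y(T) = 0`, then
`T ≥ y(0)^{1−m}/((1−m)·λ)`. -/
theorem extinction_time_lower_bound (m lam T : ℝ)
    (hm0 : 0 < m) (hm1 : m < 1) (hlam : 0 < lam) (hT : 0 < T)
    (y y' : ℝ → ℝ)
    (hcont : ContinuousOn y (Set.Icc 0 T))
    (hderiv : ∀ t ∈ Set.Ioo (0 : ℝ) T, HasDerivAt y (y' t) t)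
    (hnonneg : ∀ t ∈ Set.Icc (0 : ℝ) T, 0 ≤ y t)
    (hineq : ∀ t ∈ Set.Ioo (0 : ℝ) T, y' t ≥ -lam * y t ^ m)
    (hyT : y T = 0) :
    T ≥ y 0 ^ (1 - m) / ((1 - m) * lam) := by
  rcases eq_or_lt_of_le (hnonneg 0 ⟨le_refl 0, hT.le⟩) with h0 | h0
  · rw [← h0, Real.zero_rpow (by linarith), zero_div]
    exact hT.le
  -- first zero of y
  set S : Set ℝ := {t | t ∈ Set.Icc (0:ℝ) T ∧ y t = 0} with hS
  have hSne : S.Nonempty := ⟨T, ⟨hT.le, le_refl T⟩, hyT⟩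
  have hSbdd : BddBelow S := ⟨0, fun t ht => ht.1.1⟩
  have hSclosed : IsClosed S := by
    have h := hcont.preimage_isClosed_of_isClosed isClosed_Icc
      (isClosed_singleton (x := (0:ℝ)))
    have heq : S = Set.Icc 0 T ∩ y ⁻¹' {0} := by
      ext t; simp [hS]
    rw [heq]; exact h
  set τ := sInf S with hτdef
  have hτmem : τ ∈ S := hSclosed.csInf_mem hSne hSbdd
  obtain ⟨⟨hτ0, hτT⟩, hyτ⟩ := hτmem
  have hτpos : 0 < τ := by
    rcases eq_or_lt_of_le hτ0 with h | h
    · exfalso; rw [← h] at hyτ; linarith [hyτ, h0]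
    · exact h
  have hpos : ∀ t ∈ Set.Ico (0:ℝ) τ, 0 < y t := by
    intro t ht
    rcases eq_or_lt_of_le (hnonneg t ⟨ht.1, le_trans ht.2.le hτT⟩) with h | h
    · exfalso
      have : t ∈ S := ⟨⟨ht.1, le_trans ht.2.le hτT⟩, h.symm⟩
      exact absurd (csInf_le hSbdd this) (not_le.mpr ht.2)
    · exact h
  -- the monotone auxiliary function
  set g : ℝ → ℝ := fun t => y t ^ (1 - m) + ((1 - m) * lam) * t with hg
  have hgc : ContinuousOn g (Set.Icc 0 τ) := by
    apply ContinuousOn.add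
    · exact (hcont.mono (Set.Icc_subset_Icc_right hτT)).rpow_const
        (fun x _ => Or.inr (by linarith))
    · exact (continuous_const.mul continuous_id).continuousOn
  have hgd : ∀ t ∈ Set.Ioo (0:ℝ) τ,
      HasDerivAt g (y' t * (1 - m) * y t ^ (1 - m - 1) + (1 - m) * lam) t := by
    intro t ht
    have hyd := hderiv t ⟨ht.1, lt_of_lt_of_le ht.2 hτT⟩
    have h1 := hyd.rpow_const (p := 1 - m) (Or.inl (hpos t ⟨ht.1.le, ht.2⟩).ne')
    have h2 : HasDerivAt (fun x : ℝ => ((1 - m) * lam) * x) ((1 - m) * lam) t := by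
      simpa using (hasDerivAt_id t).const_mul ((1 - m) * lam)
    simpa [hg, mul_assoc, Pi.add_def] using h1.add h2
  have hkey : ∀ t ∈ Set.Ioo (0:ℝ) τ,
      0 ≤ y' t * (1 - m) * y t ^ (1 - m - 1) + (1 - m) * lam := by
    intro t ht
    have yp := hpos t ⟨ht.1.le, ht.2⟩
    have h1 : -lam * y t ^ m ≤ y' t := hineq t ⟨ht.1, lt_of_lt_of_le ht.2 hτT⟩
    have h2 : (0:ℝ) < y t ^ (1 - m - 1) := Real.rpow_pos_of_pos yp _
    have h3 : y t ^ m * y t ^ (1 - m - 1) = y t ^ (m + (1 - m - 1)) :=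
      (Real.rpow_add yp m (1 - m - 1)).symm
    have h4 : y t ^ (m + (1 - m - 1)) = 1 := by
      rw [show m + (1 - m - 1) = 0 by ring, Real.rpow_zero]
    have hAB : y t ^ m * y t ^ (1 - m - 1) = 1 := h3.trans h4
    have h5 : (-lam * y t ^ m) * ((1 - m) * y t ^ (1 - m - 1))
        ≤ y' t * ((1 - m) * y t ^ (1 - m - 1)) :=
      mul_le_mul_of_nonneg_right h1 (mul_pos (by linarith) h2).le
    have h6 : (-lam * y t ^ m) * ((1 - m) * y t ^ (1 - m - 1)) = -((1 - m) * lam) := by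
      calc (-lam * y t ^ m) * ((1 - m) * y t ^ (1 - m - 1))
          = -((1 - m) * lam) * (y t ^ m * y t ^ (1 - m - 1)) := by ring
        _ = -((1 - m) * lam) := by rw [hAB, mul_one]
    nlinarith [h5, h6]
  have hmono : MonotoneOn g (Set.Icc 0 τ) := by
    apply monotoneOn_of_deriv_nonneg (convex_Icc 0 τ) hgc
    · rw [interior_Icc]
      exact fun t ht => (hgd t ht).differentiableAt.differentiableWithinAt
    · rw [interior_Icc]
      intro t ht
      rw [(hgd t ht).deriv]
      exact hkey t ht
  have hle : g 0 ≤ g τ := hmono ⟨le_refl 0, hτ0⟩ ⟨hτ0, le_refl τ⟩ hτ0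
  have hg0 : g 0 = y 0 ^ (1 - m) := by simp [hg]
  have hgτ : g τ = (1 - m) * lam * τ := by
    simp [hg, hyτ, Real.zero_rpow (show (1:ℝ) - m ≠ 0 by linarith)]
  rw [ge_iff_le, div_le_iff₀ (mul_pos (by linarith) hlam)]
  have : y 0 ^ (1 - m) ≤ (1 - m) * lam * τ := by rw [← hg0, ← hgτ]; exact hle
  nlinarith [this, mul_le_mul_of_nonneg_left hτT (mul_pos (show (0:ℝ) < 1 - m by linarith) hlam).le]
end
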